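/- arXiv:2104.02280 — 2 statements merged into one kernel-verified Lean document; each statement's English description precedes it below -/
import Mathlib

section
/- Let n ≥ 5 and let A be the n×n clamped-free beam matrix. Then A is invertible and every entry of A⁻¹ is strictly positive: (A⁻¹)_{i,j} > 0 for all 1 ≤ i, j ≤ n. -/
/-!
Let `T` be the unit lower-triangular Toeplitz matrix of `(1 - z)²`, the second-difference
operator with a clamped left end. Up to doubling its last row, the beam matrix is the weighted
Gram matrix `Tᵀ W T` with `W = diag (2, 1, …, 1)`: `A = E Tᵀ W T` with `E = diag (1, …, 1, 2)`.
The inverse of `T` is the Toeplitz matrix of `(1 - z)⁻²`, with entries `i - j + 1 ≥ 1` on and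
below the diagonal, so every entry of `A⁻¹ = T⁻¹ W⁻¹ (T⁻¹)ᵀ E⁻¹` is a sum of nonnegative terms,
the one coming from the first column of `T⁻¹` being positive.
-/

/-- The `n × n` clamped-free beam matrix (1-based index `i' = i+1`). -/
def A_CF (n : ℕ) : Matrix (Fin n) (Fin n) ℝ :=
  Matrix.of fun i j =>
    let i' := (i : ℕ) + 1
    let j' := (j : ℕ) + 1
    if i' = j' then (if i' = 1 then 7 else if i' = n - 1 then 5 else if i' = n then 2 else 6)
    else if j' = i' + 1 then (if i' = n - 1 then -2 else -4)
    else if i' = j' + 1 then -4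
    else if j' = i' + 2 then 1
    else if i' = j' + 2 then (if i' = n then 2 else 1)
    else 0

open Matrix Finset

section Factorization

variable {ι K : Type*} [Fintype ι] [DecidableEq ι] [Field K]

theorem mul_eq_one_of_eq_diagonal_mul_transpose_mul {A T S : Matrix ι ι K} {d e : ι → K}
    (hA : A = diagonal e * (Tᵀ * diagonal d * T)) (hST : S * T = 1)
    (hd : ∀ i, d i ≠ 0) (he : ∀ i, e i ≠ 0) :
    A * (S * diagonal d⁻¹ * Sᵀ * diagonal e⁻¹) = 1 := by
  have hTS : T * S = 1 := mul_eq_one_comm.1 hST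
  have hTtSt : Tᵀ * Sᵀ = 1 := by rw [← transpose_mul, hST, transpose_one]
  have hdiag {f : ι → K} (hf : ∀ i, f i ≠ 0) : diagonal f * diagonal f⁻¹ = 1 := by
    rw [diagonal_mul_diagonal, ← diagonal_one]
    exact congrArg diagonal (funext fun i => mul_inv_cancel₀ (hf i))
  rw [hA]
  simp only [Matrix.mul_assoc]
  rw [← Matrix.mul_assoc T, hTS, Matrix.one_mul, ← Matrix.mul_assoc (diagonal d), hdiag hd,
    Matrix.one_mul, ← Matrix.mul_assoc Tᵀ, hTtSt, Matrix.one_mul, hdiag he]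

theorem mul_diagonal_mul_transpose_mul_diagonal_apply_pos [LinearOrder K] [IsStrictOrderedRing K]
    {S : Matrix ι ι K} {u v : ι → K} (hS : ∀ i j, 0 ≤ S i j) (l : ι) (hl : ∀ i, 0 < S i l)
    (hu : ∀ i, 0 < u i) (hv : ∀ i, 0 < v i) (i j : ι) :
    0 < (S * diagonal u * Sᵀ * diagonal v) i j := by
  rw [mul_diagonal, mul_apply]
  simp only [mul_diagonal, transpose_apply]
  refine mul_pos (sum_pos' (fun k _ => ?_) ⟨l, mem_univ l, ?_⟩) (hv j)
  · exact mul_nonneg (mul_nonneg (hS i k) (hu k).le) (hS j k)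
  · exact mul_pos (mul_pos (hl i) (hu l)) (hl j)

end Factorization

def secondDiffCoeff (i j : ℕ) : ℝ :=
  if i = j then 1 else if i = j + 1 then -2 else if i = j + 2 then 1 else 0

def secondDiff (n : ℕ) : Matrix (Fin n) (Fin n) ℝ := of fun i j => secondDiffCoeff i j

def secondDiffInv (n : ℕ) : Matrix (Fin n) (Fin n) ℝ :=
  of fun i j => if (j : ℕ) ≤ i then (i : ℝ) - j + 1 else 0

def clampedWeight (n : ℕ) (i : Fin n) : ℝ := if (i : ℕ) = 0 then 2 else 1

def freeWeight (n : ℕ) (i : Fin n) : ℝ := if (i : ℕ) + 1 = n then 2 else 1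

lemma sum_secondDiffCoeff_mul {n : ℕ} (j : Fin n) (f : ℕ → ℝ) :
    ∑ k : Fin n, secondDiffCoeff k j * f k =
      f j - (if (j : ℕ) + 1 < n then 2 * f (j + 1) else 0)
        + (if (j : ℕ) + 2 < n then f (j + 2) else 0) := by
  have h (k : ℕ) : secondDiffCoeff k j * f k
      = (if (j : ℕ) = k then f k else 0) - (if (j : ℕ) + 1 = k then 2 * f k else 0)
        + (if (j : ℕ) + 2 = k then f k else 0) := by
    unfold secondDiffCoeff
    split_ifs <;> first | omega | ring
  rw [Fin.sum_univ_eq_sum_range (fun k => secondDiffCoeff k j * f k)]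
  simp only [h, sum_add_distrib, sum_sub_distrib, sum_ite_eq, mem_range, j.isLt, if_true]

lemma secondDiffInv_mul_secondDiff (n : ℕ) : secondDiffInv n * secondDiff n = 1 := by
  ext i j
  simp only [mul_apply, secondDiffInv, secondDiff, of_apply]
  simp_rw [mul_comm _ (secondDiffCoeff _ _)]
  rw [sum_secondDiffCoeff_mul j (fun k : ℕ => if k ≤ (i : ℕ) then ((i : ℕ) : ℝ) - k + 1 else 0)]
  obtain ⟨a, ha⟩ := i
  obtain ⟨b, hb⟩ := j
  simp only [one_apply, Fin.mk.injEq]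
  obtain h | rfl | rfl | ⟨d, rfl⟩ : a < b ∨ a = b ∨ a = b + 1 ∨ ∃ d, a = b + 2 + d := by
    rcases lt_or_ge a (b + 2) with h | h
    · omega
    · exact .inr (.inr (.inr (Nat.exists_eq_add_of_le h)))
  all_goals split_ifs <;> first | omega | (push_cast; ring)

lemma secondDiffInv_nonneg {n : ℕ} (i j : Fin n) : 0 ≤ secondDiffInv n i j := by
  simp only [secondDiffInv, of_apply]
  split_ifs with h
  · have : ((j : ℕ) : ℝ) ≤ i := by exact_mod_cast h
    linarith
  · rfl

lemma secondDiffInv_pos_of_le {n : ℕ} {i j : Fin n} (h : j ≤ i) : 0 < secondDiffInv n i j := by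
  simp only [secondDiffInv, of_apply, if_pos (Fin.le_def.1 h)]
  have : ((j : ℕ) : ℝ) ≤ i := by exact_mod_cast h
  linarith

lemma clampedWeight_pos {n : ℕ} (i : Fin n) : 0 < clampedWeight n i := by
  unfold clampedWeight; split_ifs <;> norm_num

lemma freeWeight_pos {n : ℕ} (i : Fin n) : 0 < freeWeight n i := by
  unfold freeWeight; split_ifs <;> norm_num

theorem A_CF_eq_diagonal_mul_transpose_mul {n : ℕ} (hn : 3 ≤ n) :
    A_CF n = diagonal (freeWeight n) *
      ((secondDiff n)ᵀ * diagonal (clampedWeight n) * secondDiff n) := by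
  ext i j
  rw [diagonal_mul, mul_apply]
  simp only [mul_diagonal, transpose_apply, secondDiff, clampedWeight, of_apply, mul_assoc]
  rw [sum_secondDiffCoeff_mul i (fun k : ℕ => (if k = 0 then 2 else 1) * secondDiffCoeff k j)]
  obtain ⟨a, ha⟩ := i
  obtain ⟨b, hb⟩ := j
  simp only [A_CF, freeWeight, secondDiffCoeff, of_apply]
  rcases (by omega : b + 3 ≤ a ∨ b + 2 = a ∨ b + 1 = a ∨ b = a ∨ b = a + 1 ∨ b = a + 2 ∨
    a + 3 ≤ b) with h | rfl | rfl | rfl | rfl | rfl | h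
  all_goals simp (disch := omega) only [if_pos, if_neg]
  all_goals split_ifs <;> first | omega | norm_num

/-- The clamped-free beam matrix is invertible and its inverse has strictly
positive entries. -/
theorem A_CF_invertible_and_inv_pos (n : ℕ) (hn : 5 ≤ n) :
    IsUnit (A_CF n) ∧ ∀ i j : Fin n, 0 < (A_CF n)⁻¹ i j := by
  have hinv := mul_eq_one_of_eq_diagonal_mul_transpose_mul
    (A_CF_eq_diagonal_mul_transpose_mul (by omega)) (secondDiffInv_mul_secondDiff n)
    (fun i => (clampedWeight_pos i).ne') (fun i => (freeWeight_pos i).ne')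
  refine ⟨IsUnit.of_mul_eq_one _ hinv, fun i j => ?_⟩
  rw [inv_eq_right_inv hinv]
  exact mul_diagonal_mul_transpose_mul_diagonal_apply_pos secondDiffInv_nonneg ⟨0, i.pos⟩
    (fun _ => secondDiffInv_pos_of_le (Nat.zero_le _)) (fun k => inv_pos.2 (clampedWeight_pos k))
    (fun k => inv_pos.2 (freeWeight_pos k)) i j
end

section
/- Let n ≥ 5 and let A be the n×n clamped-free beam matrix. Then the operator 1-norm of the inverse equals ‖A⁻¹‖₁ = (n⁴ − n²)/8; i.e., the maximum over columns j of ∑_{i=1}^{n} |(A⁻¹)_{i,j}| equals (n⁴ − n²)/8 and is attained at column j = n−1. -/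
/-!
Write `A_CF n = D * S` with `D = diag(1, …, 1, 2)` and `S` symmetric. In 1-based indices, with
`a = min i j` and `b = max i j`, the inverse of `S` is `G i j = (3a²b − a³ + a)/6`. Each column
of `G` is a cubic in the row index up to the diagonal and affine beyond it, so the interior rows
`1, −4, 6, −4, 1` of `A_CF` annihilate it away from the diagonal; the cubic vanishes at `a = 0`
and takes equal values at `a = ±1`, which turns the first row `7, −4, 1` into the interior one.
Hence `(A_CF n)⁻¹ = G * D⁻¹` is entrywise positive. The entries of `G` increase with the column
index, and halving makes the last column no larger than column `n − 1`, so the largest absolute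
column sum is that of column `n − 1`, which is `(n⁴ − n²)/8`. For the `1`-norm, the operator
norm of a matrix is its largest absolute column sum.
-/

open scoped ENNReal

/-- The operator norm of an `n × n` real matrix induced by the vector `p`-norm
on `ℝⁿ` (realized as `PiLp`/`WithLp`). -/
noncomputable def opNormP (n : ℕ) (p : ℝ≥0∞) [Fact (1 ≤ p)]
    (B : Matrix (Fin n) (Fin n) ℝ) : ℝ :=
  ‖LinearMap.toContinuousLinearMap
    ((WithLp.linearEquiv p ℝ (Fin n → ℝ)).symm.toLinearMap ∘ₗ
      Matrix.toLin' B ∘ₗ (WithLp.linearEquiv p ℝ (Fin n → ℝ)).toLinearMap)‖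

theorem opNormP_one_eq_of_isGreatest {n : ℕ} {M : Matrix (Fin n) (Fin n) ℝ} {C : ℝ}
    (h : IsGreatest (Set.range fun j => ∑ i, |M i j|) C) : opNormP n 1 M = C := by
  obtain ⟨⟨j₀, hj₀⟩, hle⟩ := h
  set f := LinearMap.toContinuousLinearMap
    ((WithLp.linearEquiv 1 ℝ (Fin n → ℝ)).symm.toLinearMap ∘ₗ
      Matrix.toLin' M ∘ₗ (WithLp.linearEquiv 1 ℝ (Fin n → ℝ)).toLinearMap)
  have hf : ∀ x i, f x i = ∑ j, M i j * x j := fun x i => by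
    simp [f, Matrix.toLin'_apply, Matrix.mulVec, dotProduct]
  change ‖f‖ = C
  have hC : 0 ≤ C := hj₀ ▸ Finset.sum_nonneg fun i _ => abs_nonneg _
  refine le_antisymm (f.opNorm_le_bound hC fun x => ?_) ?_
  · simp only [PiLp.norm_eq_of_L1, Real.norm_eq_abs, hf]
    calc ∑ i, |∑ j, M i j * x j| ≤ ∑ i, ∑ j, |M i j| * |x j| := by
          gcongr with i; exact (Finset.abs_sum_le_sum_abs _ _).trans_eq (by simp [abs_mul])
      _ = ∑ j, (∑ i, |M i j|) * |x j| := by rw [Finset.sum_comm]; simp [Finset.sum_mul]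
      _ ≤ ∑ j, C * |x j| := by gcongr with j; exact hle ⟨j, rfl⟩
      _ = C * ∑ j, |x j| := (Finset.mul_sum ..).symm
  · have := f.le_opNorm (WithLp.toLp 1 (Pi.single j₀ 1))
    simpa [PiLp.norm_eq_of_L1, hf, Pi.single_apply, hj₀] using this

theorem A_CF_apply_eq_zero {n : ℕ} {i k : Fin n} (h : (i : ℕ) + 2 < k ∨ (k : ℕ) + 2 < i) :
    A_CF n i k = 0 := by
  simp only [A_CF, Matrix.of_apply]
  split_ifs <;> first | rfl | omega

def beamStencil (m : ℕ) (x : ℕ → ℝ) (i : ℕ) : ℝ :=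
  if i = 0 then 7 * x 0 - 4 * x 1 + x 2
  else if i = 1 then -4 * x 0 + 6 * x 1 - 4 * x 2 + x 3
  else if i = m + 3 then x (m + 1) - 4 * x (m + 2) + 5 * x (m + 3) - 2 * x (m + 4)
  else if i = m + 4 then 2 * x (m + 2) - 4 * x (m + 3) + 2 * x (m + 4)
  else x (i - 2) - 4 * x (i - 1) + 6 * x i - 4 * x (i + 1) + x (i + 2)

theorem sum_A_CF_mul_eq_beamStencil {m : ℕ} (x : ℕ → ℝ) (i : Fin (m + 5)) :
    ∑ k, A_CF (m + 5) i k * x k = beamStencil m x i := by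
  obtain ⟨i, hi⟩ := i
  set F : ℕ → ℝ := fun k => if h : k < m + 5 then A_CF (m + 5) ⟨i, hi⟩ ⟨k, h⟩ * x k else 0
  have window : ∀ a w, a + w ≤ m + 5 →
      (∀ k < m + 5, k < a ∨ a + w ≤ k → i + 2 < k ∨ k + 2 < i) →
      ∑ k, A_CF (m + 5) ⟨i, hi⟩ k * x k = ∑ d ∈ Finset.range w, F (a + d) := by
    intro a w hw hout
    rw [Finset.sum_fin_eq_sum_range, ← Nat.add_sub_cancel_left (n := a) (m := w),
      ← Finset.sum_Ico_eq_sum_range]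
    refine (Finset.sum_subset (fun k hk => ?_) fun k hk hk' => ?_).symm
    · simp only [Finset.mem_Ico, Finset.mem_range] at hk ⊢; omega
    · simp only [Finset.mem_Ico, Finset.mem_range, not_and_or, not_le, not_lt] at hk hk'
      rw [dif_pos hk, A_CF_apply_eq_zero (i := ⟨i, hi⟩) (k := ⟨k, hk⟩) (hout k hk hk'), zero_mul]
  simp only [beamStencil]
  split_ifs with h0 h1 h3 h4
  · subst h0; rw [window 0 3 (by omega) (fun k _ _ => by omega)]
    simp only [Finset.sum_range_succ, Finset.sum_range_zero, F, A_CF, Matrix.of_apply, add_zero]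
    simp (disch := omega) only [dif_pos, if_pos, if_neg, ↓reduceIte]
    ring
  · subst h1; rw [window 0 4 (by omega) (fun k _ _ => by omega)]
    simp only [Finset.sum_range_succ, Finset.sum_range_zero, F, A_CF, Matrix.of_apply, add_zero]
    simp (disch := omega) only [dif_pos, if_pos, if_neg, ↓reduceIte]
    ring
  · subst h3; rw [window (m + 1) 4 (by omega) (fun k _ _ => by omega)]
    simp only [Finset.sum_range_succ, Finset.sum_range_zero, F, A_CF, Matrix.of_apply, add_zero]
    simp (disch := omega) only [dif_pos, if_pos, if_neg, ↓reduceIte]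
    ring
  · subst h4; rw [window (m + 2) 3 (by omega) (fun k _ _ => by omega)]
    simp only [Finset.sum_range_succ, Finset.sum_range_zero, F, A_CF, Matrix.of_apply, add_zero]
    simp (disch := omega) only [dif_pos, if_pos, if_neg, ↓reduceIte]
    ring
  · obtain ⟨t, rfl⟩ : ∃ t, i = t + 2 := ⟨i - 2, by omega⟩
    rw [window t 5 (by omega) (fun k _ _ => by omega), Nat.add_sub_cancel,
      show t + 2 - 1 = t + 1 by omega]
    simp only [Finset.sum_range_succ, Finset.sum_range_zero, F, A_CF, Matrix.of_apply, add_zero]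
    simp (disch := omega) only [dif_pos, if_pos, if_neg, ↓reduceIte]
    ring

noncomputable def beamGreenCubic (a b : ℝ) : ℝ := (3 * a ^ 2 * b - a ^ 3 + a) / 6

noncomputable def beamGreen (i j : ℕ) : ℝ :=
  beamGreenCubic ((min i j : ℕ) + 1) ((max i j : ℕ) + 1)

theorem beamGreen_of_le {i j : ℕ} (h : i ≤ j) :
    beamGreen i j = beamGreenCubic ((i : ℝ) + 1) ((j : ℝ) + 1) := by
  rw [beamGreen, min_eq_left h, max_eq_right h]

theorem beamGreen_of_ge {i j : ℕ} (h : j ≤ i) :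
    beamGreen i j = beamGreenCubic ((j : ℝ) + 1) ((i : ℝ) + 1) := by
  rw [beamGreen, min_eq_right h, max_eq_left h]

theorem beamStencil_beamGreen {m i j : ℕ} (hi : i < m + 5) (hj : j < m + 5) :
    beamStencil m (beamGreen · j) i = if i = j then (if j = m + 4 then 2 else 1) else 0 := by
  rcases (by omega : i = 0 ∨ i = 1 ∨ (2 ≤ i ∧ i ≤ m + 2) ∨ i = m + 3 ∨ i = m + 4) with
    rfl | rfl | ⟨hi2, hi3⟩ | rfl | rfl
  · rcases (by omega : j = 0 ∨ j = 1 ∨ 2 ≤ j) with rfl | rfl | hj' <;>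
    simp (disch := omega) only [beamStencil, beamGreen_of_le, beamGreen_of_ge, if_pos, if_neg] <;>
    simp only [beamGreenCubic] <;> push_cast <;> ring
  · rcases (by omega : j = 0 ∨ j = 1 ∨ j = 2 ∨ 3 ≤ j) with rfl | rfl | rfl | hj' <;>
    simp (disch := omega) only [beamStencil, beamGreen_of_le, beamGreen_of_ge, if_pos, if_neg] <;>
    simp only [beamGreenCubic] <;> push_cast <;> ring
  · obtain ⟨t, rfl⟩ : ∃ t, i = t + 2 := ⟨i - 2, by omega⟩
    rcases (by omega : j ≤ t ∨ j = t + 1 ∨ j = t + 2 ∨ j = t + 3 ∨ t + 4 ≤ j) with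
      hj' | rfl | rfl | rfl | hj' <;>
    simp (disch := omega) only [beamStencil, beamGreen_of_le, beamGreen_of_ge, if_pos, if_neg,
      Nat.add_sub_cancel, show t + 2 - 1 = t + 1 by omega] <;>
    simp only [beamGreenCubic] <;> push_cast <;> ring
  · rcases (by omega : j ≤ m + 1 ∨ j = m + 2 ∨ j = m + 3 ∨ j = m + 4) with hj' | rfl | rfl | rfl <;>
    simp (disch := omega) only [beamStencil, beamGreen_of_le, beamGreen_of_ge, if_pos, if_neg] <;>
    simp only [beamGreenCubic] <;> push_cast <;> ring
  · rcases (by omega : j ≤ m + 2 ∨ j = m + 3 ∨ j = m + 4) with hj' | rfl | rfl <;>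
    simp (disch := omega) only [beamStencil, beamGreen_of_le, beamGreen_of_ge, if_pos, if_neg] <;>
    simp only [beamGreenCubic] <;> push_cast <;> ring

theorem beamGreen_le_succ (i j : ℕ) : beamGreen i j ≤ beamGreen i (j + 1) := by
  have hi : (0 : ℝ) ≤ i := i.cast_nonneg
  have hj : (0 : ℝ) ≤ j := j.cast_nonneg
  rcases le_or_gt i j with h | h
  · rw [beamGreen_of_le h, beamGreen_of_le (by omega), beamGreenCubic, beamGreenCubic]
    push_cast
    nlinarith [sq_nonneg ((i : ℝ) + 1)]
  · have hji : (j : ℝ) + 1 ≤ i := by exact_mod_cast h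
    rw [beamGreen_of_ge h.le, beamGreen_of_ge (by omega), beamGreenCubic, beamGreenCubic]
    push_cast
    nlinarith [mul_nonneg (by linarith : (0 : ℝ) ≤ 2 * j + 3) (sub_nonneg.2 hji)]

theorem beamGreen_mono_right (i : ℕ) : Monotone (beamGreen i) :=
  monotone_nat_of_le_succ (beamGreen_le_succ i)

theorem beamGreen_nonneg (i j : ℕ) : 0 ≤ beamGreen i j := by
  have h0 : beamGreen i 0 = ((i : ℝ) + 1) / 2 := by
    rw [beamGreen_of_ge i.zero_le, beamGreenCubic]; push_cast; ring
  calc (0 : ℝ) ≤ beamGreen i 0 := by rw [h0]; positivity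
    _ ≤ beamGreen i j := beamGreen_mono_right i j.zero_le

theorem beamGreen_succ_le_two_mul {i N : ℕ} (hN : 1 ≤ N) (hi : i ≤ N + 1) :
    beamGreen i (N + 1) ≤ 2 * beamGreen i N := by
  have hN' : (1 : ℝ) ≤ N := by exact_mod_cast hN
  rcases hi.lt_or_eq with hi | rfl
  · have hiN : (i : ℝ) ≤ N := by exact_mod_cast Nat.lt_succ_iff.mp hi
    have hi0 : (0 : ℝ) ≤ i := i.cast_nonneg
    rw [beamGreen_of_le hi.le, beamGreen_of_le (by omega), beamGreenCubic, beamGreenCubic]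
    push_cast
    nlinarith [mul_nonneg (sq_nonneg ((i : ℝ) + 1)) (by linarith : (0 : ℝ) ≤ 3 * N - (i + 1))]
  · rw [beamGreen_of_le le_rfl, beamGreen_of_ge (by omega), beamGreenCubic, beamGreenCubic]
    push_cast
    nlinarith [mul_nonneg (by linarith : (0 : ℝ) ≤ N) (sq_nonneg ((N : ℝ) + 1))]

theorem sum_range_beamGreenCubic (N : ℕ) (b : ℝ) :
    ∑ i ∈ Finset.range N, beamGreenCubic ((i : ℝ) + 1) b =
      b * N * (N + 1) * (2 * N + 1) / 12 - (N : ℝ) ^ 2 * (N + 1) ^ 2 / 24 + N * (N + 1) / 12 := by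
  induction N with
  | zero => simp
  | succ N ih => rw [Finset.sum_range_succ, ih, beamGreenCubic]; push_cast; ring

theorem sum_beamGreen_penultimate (N : ℕ) :
    ∑ i ∈ Finset.range (N + 2), beamGreen i N = (((N : ℝ) + 2) ^ 4 - ((N : ℝ) + 2) ^ 2) / 8 := by
  rw [Finset.sum_range_succ, Finset.sum_congr rfl fun i hi =>
    beamGreen_of_le (Nat.lt_succ_iff.mp (Finset.mem_range.mp hi)), sum_range_beamGreenCubic,
    beamGreen_of_ge (by omega), beamGreenCubic]
  push_cast
  ring

theorem inv_A_CF_apply {m : ℕ} (i j : Fin (m + 5)) :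
    (A_CF (m + 5))⁻¹ i j = beamGreen i j / (if (j : ℕ) = m + 4 then 2 else 1) := by
  set G : Matrix (Fin (m + 5)) (Fin (m + 5)) ℝ :=
    Matrix.of fun i j => beamGreen i j / (if (j : ℕ) = m + 4 then 2 else 1)
  suffices A_CF (m + 5) * G = 1 by rw [Matrix.inv_eq_right_inv this]; rfl
  ext k l
  simp only [G, Matrix.mul_apply, Matrix.of_apply, ← mul_div_assoc, ← Finset.sum_div]
  rw [sum_A_CF_mul_eq_beamStencil (beamGreen · l), beamStencil_beamGreen k.2 l.2, Matrix.one_apply]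
  by_cases hkl : k = l
  · rw [if_pos (congrArg Fin.val hkl), if_pos hkl, div_self (by split_ifs <;> norm_num)]
  · rw [if_neg (Fin.val_ne_of_ne hkl), if_neg hkl, zero_div]

theorem abs_inv_A_CF_le_penultimate {m : ℕ} (i j : Fin (m + 5)) :
    |(A_CF (m + 5))⁻¹ i j| ≤ |(A_CF (m + 5))⁻¹ i ⟨m + 3, by omega⟩| := by
  have hpen : (A_CF (m + 5))⁻¹ i ⟨m + 3, by omega⟩ = beamGreen i (m + 3) := by
    rw [inv_A_CF_apply, if_neg (show m + 3 ≠ m + 4 by omega), div_one]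
  rw [hpen, abs_of_nonneg (beamGreen_nonneg _ _), inv_A_CF_apply]
  split_ifs with hj
  · rw [abs_of_nonneg (by have := beamGreen_nonneg i j; positivity),
      div_le_iff₀ (by norm_num : (0 : ℝ) < 2), mul_comm, hj]
    exact beamGreen_succ_le_two_mul (by omega) (by omega)
  · rw [div_one, abs_of_nonneg (beamGreen_nonneg _ _)]
    exact beamGreen_mono_right i (by omega)

theorem sum_abs_inv_A_CF_penultimate (m : ℕ) :
    ∑ i, |(A_CF (m + 5))⁻¹ i ⟨m + 3, by omega⟩| =
      (((m + 5 : ℕ) : ℝ) ^ 4 - ((m + 5 : ℕ) : ℝ) ^ 2) / 8 := by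
  simp only [inv_A_CF_apply, if_neg (by omega : m + 3 ≠ m + 4), div_one,
    abs_of_nonneg (beamGreen_nonneg _ _)]
  rw [Fin.sum_univ_eq_sum_range (beamGreen · (m + 3)), sum_beamGreen_penultimate]
  push_cast
  ring

/-- The operator `1`-norm of the inverse of the clamped-free beam matrix equals
`(n⁴ - n²)/8`: every absolute column sum is at most this value, and it is
attained at column `j = n - 1` (1-based), i.e. Fin-index `n - 2`. -/
theorem A_CF_inv_one_norm (n : ℕ) (hn : 5 ≤ n) :
    opNormP n 1 (A_CF n)⁻¹ = ((n : ℝ) ^ 4 - (n : ℝ) ^ 2) / 8 ∧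
    (∀ j : Fin n, ∑ i : Fin n, |(A_CF n)⁻¹ i j| ≤ ((n : ℝ) ^ 4 - (n : ℝ) ^ 2) / 8) ∧
    ∑ i : Fin n, |(A_CF n)⁻¹ i ⟨n - 2, by omega⟩| = ((n : ℝ) ^ 4 - (n : ℝ) ^ 2) / 8 := by
  obtain ⟨m, rfl⟩ : ∃ m, n = m + 5 := ⟨n - 5, by omega⟩
  have hmax := sum_abs_inv_A_CF_penultimate m
  have hle : ∀ j, ∑ i, |(A_CF (m + 5))⁻¹ i j| ≤
      (((m + 5 : ℕ) : ℝ) ^ 4 - ((m + 5 : ℕ) : ℝ) ^ 2) / 8 := fun j =>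
    hmax ▸ Finset.sum_le_sum fun i _ => abs_inv_A_CF_le_penultimate i j
  exact ⟨opNormP_one_eq_of_isGreatest ⟨⟨_, hmax⟩, Set.forall_mem_range.2 hle⟩, hle, hmax⟩
end
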